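/- For n > 4, two subsets A, B of [n] are 1-orthogonal if and only if A ⊆ B, or B ⊆ A, or A ∩ B = ∅, or A ∪ B = [n]. -/

import Mathlib

/-- A hypergraph on vertex set `Fin n`, identified with its family of hyperedges. -/
abbrev Family (n : ℕ) := Set (Finset (Fin n))

/-- Membership in the class `K_r(n)`: rules (k0), (k1), (k2). -/
def MemK (r n : ℕ) (E : Family n) : Prop :=
  (∀ X : Finset (Fin n), X.card ≤ r → X ∈ E) ∧
  (∀ A ∈ E, Aᶜ ∈ E) ∧
  (∀ A ∈ E, ∀ B ∈ E, r ≤ (A ∩ B).card → A ∪ B ∈ E)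

/-- Membership in the class `K⊥_r(n)`: only rules (k0) and (k1). -/
def MemKbot (r n : ℕ) (E : Family n) : Prop :=
  (∀ X : Finset (Fin n), X.card ≤ r → X ∈ E) ∧
  (∀ A ∈ E, Aᶜ ∈ E)

/-- Closure of `H` in `K_r(n)`: intersection of all members of `K_r(n)` containing `H`. -/
def clr (r n : ℕ) (H : Family n) : Family n :=
  ⋂₀ {E | MemK r n E ∧ H ⊆ E}

/-- Closure of `H` in `K⊥_r(n)`. -/
def clbot (r n : ℕ) (H : Family n) : Family n :=
  ⋂₀ {E | MemKbot r n E ∧ H ⊆ E}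

/-- `A` and `B` are `r`-orthogonal. -/
def Ortho (r n : ℕ) (A B : Finset (Fin n)) : Prop :=
  clr r n {A, B} = clbot r n {A, B}

/-- A family is `r`-cross-free if all pairs of members are `r`-orthogonal. -/
def CrossFree (r n : ℕ) (H : Family n) : Prop :=
  ∀ A ∈ H, ∀ B ∈ H, Ortho r n A B

/-!
The family `cl⊥_1 {A, B}` consists of the sets of size at most one, their complements, and
`A, Aᶜ, B, Bᶜ`. If `A` and `B` do not cross, this family is already closed under (k2): two of its
members meeting in a point are nested or cover `[n]`. If they cross, then since `n ≥ 5` one of the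
four atoms has two elements; as both closures only see `A` and `B` up to complement, we may take it
to be `A ∩ B`. Then (k2) applied to `Aᶜ` and `Bᶜ` (which meet in the atom `(A ∪ B)ᶜ`) puts
`(A ∩ B)ᶜ` into `cl_1 {A, B}`, and this set is neither small, co-small, nor one of `A, Aᶜ, B, Bᶜ`.
-/

variable {r n : ℕ}

section Closure

variable (r n) (H : Family n)

lemma subset_clr : H ⊆ clr r n H :=
  fun _ hX => Set.mem_sInter.mpr fun _ hE => hE.2 hX

lemma memK_clr : MemK r n (clr r n H) := by
  refine ⟨fun X hX => Set.mem_sInter.mpr fun E hE => hE.1.1 X hX, ?_, ?_⟩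
  · intro X hX
    exact Set.mem_sInter.mpr fun E hE => hE.1.2.1 X (Set.mem_sInter.mp hX E hE)
  · intro X hX Y hY hXY
    exact Set.mem_sInter.mpr fun E hE =>
      hE.1.2.2 X (Set.mem_sInter.mp hX E hE) Y (Set.mem_sInter.mp hY E hE) hXY

lemma clr_subset {E : Family n} (hE : MemK r n E) (hH : H ⊆ E) : clr r n H ⊆ E :=
  Set.sInter_subset_of_mem ⟨hE, hH⟩

lemma clbot_subset_clr : clbot r n H ⊆ clr r n H :=
  Set.sInter_subset_sInter fun _ ⟨hE, hH⟩ => ⟨⟨hE.1, hE.2.1⟩, hH⟩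

variable {r n H}

lemma mem_clbot_iff {X : Finset (Fin n)} :
    X ∈ clbot r n H ↔ X.card ≤ r ∨ Xᶜ.card ≤ r ∨ X ∈ H ∨ Xᶜ ∈ H := by
  constructor
  · refine fun hX => Set.mem_sInter.mp hX {X | X.card ≤ r ∨ Xᶜ.card ≤ r ∨ X ∈ H ∨ Xᶜ ∈ H}
      ⟨⟨fun X hX => .inl hX, fun X hX => ?_⟩, fun X hX => .inr (.inr (.inl hX))⟩
    simp only [Set.mem_ofPred_eq, compl_compl] at hX ⊢
    tauto
  · rintro hX E ⟨⟨hsmall, hcompl⟩, hH⟩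
    rcases hX with hX | hX | hX | hX
    · exact hsmall X hX
    · simpa using hcompl _ (hsmall _ hX)
    · exact hH hX
    · simpa using hcompl _ (hH hX)

lemma compl_mem_iff {E : Family n} (hE : ∀ A ∈ E, Aᶜ ∈ E) {A : Finset (Fin n)} :
    Aᶜ ∈ E ↔ A ∈ E :=
  ⟨fun h => by simpa using hE _ h, hE A⟩

lemma clr_insert_compl (A : Finset (Fin n)) : clr r n (insert Aᶜ H) = clr r n (insert A H) := by
  unfold clr
  congr 1
  ext E
  simp only [Set.mem_ofPred_eq, Set.insert_subset_iff]
  exact and_congr_right fun hE => by rw [compl_mem_iff hE.2.1]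

lemma clbot_insert_compl (A : Finset (Fin n)) :
    clbot r n (insert Aᶜ H) = clbot r n (insert A H) := by
  unfold clbot
  congr 1
  ext E
  simp only [Set.mem_ofPred_eq, Set.insert_subset_iff]
  exact and_congr_right fun hE => by rw [compl_mem_iff hE.2]

end Closure

section Ortho

variable {A B : Finset (Fin n)}

lemma ortho_comm : Ortho r n B A ↔ Ortho r n A B := by
  rw [Ortho, Ortho, Set.pair_comm]

lemma ortho_compl_left : Ortho r n Aᶜ B ↔ Ortho r n A B := by
  rw [Ortho, Ortho, clr_insert_compl, clbot_insert_compl]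

lemma ortho_compl_right : Ortho r n A Bᶜ ↔ Ortho r n A B := by
  rw [← ortho_comm, ortho_compl_left, ortho_comm]

end Ortho

def Crosses (A B : Finset (Fin n)) : Prop :=
  (A ∩ B).Nonempty ∧ (A ∩ Bᶜ).Nonempty ∧ (Aᶜ ∩ B).Nonempty ∧ (Aᶜ ∩ Bᶜ).Nonempty

section Crosses

variable {A B : Finset (Fin n)}

lemma crosses_comm : Crosses B A ↔ Crosses A B := by
  unfold Crosses
  rw [Finset.inter_comm B A, Finset.inter_comm B Aᶜ, Finset.inter_comm Bᶜ A,
    Finset.inter_comm Bᶜ Aᶜ]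
  tauto

@[simp]
lemma crosses_compl_left : Crosses Aᶜ B ↔ Crosses A B := by
  simp only [Crosses, compl_compl]
  tauto

@[simp]
lemma crosses_compl_right : Crosses A Bᶜ ↔ Crosses A B := by
  rw [← crosses_comm, crosses_compl_left, crosses_comm]

lemma not_crosses_self : ¬Crosses A A := by
  simp [Crosses]

lemma not_crosses_iff :
    ¬Crosses A B ↔ A ⊆ B ∨ B ⊆ A ∨ A ∩ B = ∅ ∨ A ∪ B = Finset.univ := by
  rw [Crosses, Finset.inter_comm Aᶜ, ← Finset.sdiff_eq_inter_compl, ← Finset.sdiff_eq_inter_compl,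
    ← Finset.compl_union]
  simp only [not_and_or, Finset.not_nonempty_iff_eq_empty, Finset.sdiff_eq_empty_iff_subset,
    Finset.compl_eq_empty_iff]
  tauto

lemma card_atoms_add_eq :
    (A ∩ B).card + (A ∩ Bᶜ).card + (Aᶜ ∩ B).card + (Aᶜ ∩ Bᶜ).card = n := by
  rw [add_assoc _ (Aᶜ ∩ B).card, ← Finset.sdiff_eq_inter_compl, ← Finset.sdiff_eq_inter_compl,
    Finset.card_inter_add_card_sdiff, Finset.card_inter_add_card_sdiff,
    Finset.card_add_card_compl, Fintype.card_fin]

end Crosses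

section NotCrossing

variable {H : Family n}

lemma union_mem_clbot_of_card_le {X Y : Finset (Fin n)} (hX : X.card ≤ r ∨ Xᶜ.card ≤ r)
    (hY : Y ∈ clbot r n H) (hXY : r ≤ (X ∩ Y).card) : X ∪ Y ∈ clbot r n H := by
  rcases hX with hX | hX
  · have hXY : X ⊆ Y := Finset.inter_eq_left.mp
      (Finset.eq_of_subset_of_card_le Finset.inter_subset_left (hX.trans hXY))
    rwa [Finset.union_eq_right.mpr hXY]
  · refine mem_clbot_iff.mpr (.inr (.inl ((Finset.card_le_card ?_).trans hX)))
    exact Finset.compl_subset_compl.mpr Finset.subset_union_left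

lemma union_mem_clbot_of_not_crosses {X Y : Finset (Fin n)} (hr : 1 ≤ r) (hX : X ∈ clbot r n H)
    (hY : Y ∈ clbot r n H) (hXY : r ≤ (X ∩ Y).card) (hcross : ¬Crosses X Y) :
    X ∪ Y ∈ clbot r n H := by
  rcases not_crosses_iff.mp hcross with h | h | h | h
  · rwa [Finset.union_eq_right.mpr h]
  · rwa [Finset.union_eq_left.mpr h]
  · simp only [h, Finset.card_empty] at hXY
    omega
  · simp [h, mem_clbot_iff]

lemma memK_clbot (hr : 1 ≤ r) (hH : ∀ A ∈ H, ∀ B ∈ H, ¬Crosses A B) :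
    MemK r n (clbot r n H) := by
  refine ⟨fun X hX => mem_clbot_iff.mpr (.inl hX), fun X hX => ?_, fun X hX Y hY hXY => ?_⟩
  · rw [mem_clbot_iff, compl_compl] at *
    tauto
  rcases mem_clbot_iff.mp hX with hXs | hXs | hXH
  · exact union_mem_clbot_of_card_le (.inl hXs) hY hXY
  · exact union_mem_clbot_of_card_le (.inr hXs) hY hXY
  rcases mem_clbot_iff.mp hY with hYs | hYs | hYH
  · rw [Finset.union_comm]
    exact union_mem_clbot_of_card_le (.inl hYs) hX (by rwa [Finset.inter_comm])
  · rw [Finset.union_comm]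
    exact union_mem_clbot_of_card_le (.inr hYs) hX (by rwa [Finset.inter_comm])
  refine union_mem_clbot_of_not_crosses hr hX hY hXY ?_
  rcases hXH with hXH | hXH <;> rcases hYH with hYH | hYH <;> simpa using hH _ hXH _ hYH

lemma clr_eq_clbot_of_not_crosses (hr : 1 ≤ r) (hH : ∀ A ∈ H, ∀ B ∈ H, ¬Crosses A B) :
    clr r n H = clbot r n H :=
  (clr_subset r n H (memK_clbot hr hH) fun _ hX => mem_clbot_iff.mpr (.inr (.inr (.inl hX))))
    |>.antisymm (clbot_subset_clr r n H)

lemma ortho_of_not_crosses (hr : 1 ≤ r) {A B : Finset (Fin n)} (h : ¬Crosses A B) :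
    Ortho r n A B := by
  refine clr_eq_clbot_of_not_crosses hr ?_
  rintro X (rfl | rfl) Y (rfl | rfl)
  exacts [not_crosses_self, h, crosses_comm.not.mpr h, not_crosses_self]

end NotCrossing

section Crossing

variable {A B : Finset (Fin n)}

lemma not_ortho_one_of_crosses_of_two_le_card_inter (h : Crosses A B) (h2 : 2 ≤ (A ∩ B).card) :
    ¬Ortho 1 n A B := by
  obtain ⟨-, ⟨x, hx⟩, ⟨y, hy⟩, hAB⟩ := h
  simp only [Finset.mem_inter, Finset.mem_compl] at hx hy
  have hK := memK_clr 1 n {A, B}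
  have hA : A ∈ clr 1 n {A, B} := subset_clr 1 n _ (Set.mem_insert A _)
  have hB : B ∈ clr 1 n {A, B} := subset_clr 1 n _ (Set.mem_insert_of_mem A rfl)
  have hU : Aᶜ ∪ Bᶜ ∈ clr 1 n {A, B} := hK.2.2 _ (hK.2.1 _ hA) _ (hK.2.1 _ hB) hAB.card_pos
  intro hO
  rw [Ortho] at hO
  rw [hO, mem_clbot_iff, Finset.compl_union, compl_compl, compl_compl] at hU
  rcases hU with hU | hU | hU | hU
  · have : 1 < (Aᶜ ∪ Bᶜ).card := Finset.one_lt_card.mpr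
      ⟨x, by simp [hx.2], y, by simp [hy.1], by rintro rfl; exact hy.1 hx.1⟩
    omega
  · omega
  · rcases hU with hU | hU
    · simpa [hy.1] using congrArg (y ∈ ·) hU
    · simpa [hx.2] using congrArg (x ∈ ·) hU
  · rcases hU with hU | hU
    · simpa [hx.1, hx.2] using congrArg (x ∈ ·) hU
    · simpa [hy.1, hy.2] using congrArg (y ∈ ·) hU

lemma not_ortho_one_of_crosses (hn : 4 < n) (h : Crosses A B) : ¬Ortho 1 n A B := by
  have hsum := card_atoms_add_eq (A := A) (B := B)
  obtain h2 | h2 | h2 | h2 : 2 ≤ (A ∩ B).card ∨ 2 ≤ (A ∩ Bᶜ).card ∨ 2 ≤ (Aᶜ ∩ B).card ∨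
      2 ≤ (Aᶜ ∩ Bᶜ).card := by omega
  · exact not_ortho_one_of_crosses_of_two_le_card_inter h h2
  · rw [← ortho_compl_right]
    exact not_ortho_one_of_crosses_of_two_le_card_inter (crosses_compl_right.mpr h) h2
  · rw [← ortho_compl_left]
    exact not_ortho_one_of_crosses_of_two_le_card_inter (crosses_compl_left.mpr h) h2
  · rw [← ortho_compl_left, ← ortho_compl_right]
    exact not_ortho_one_of_crosses_of_two_le_card_inter (by simpa using h) h2

end Crossing

theorem ortho_one_iff (n : ℕ) (hn : 4 < n) (A B : Finset (Fin n)) :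
    Ortho 1 n A B ↔ (A ⊆ B ∨ B ⊆ A ∨ A ∩ B = ∅ ∨ A ∪ B = Finset.univ) := by
  rw [← not_crosses_iff]
  exact ⟨fun hO hc => not_ortho_one_of_crosses hn hc hO, ortho_of_not_crosses le_rfl⟩
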